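/- arXiv:2202.12098 — 4 statements merged into one kernel-verified Lean document; each statement's English description precedes it below -/
import Mathlib

section
/- Let u : ℝ² → ℂ be integrable (u ∈ L¹(ℝ²)), let θ ∈ ℝ² be a unit vector, and let θ⊥ denote its rotation by π/2 (i.e., θ⊥ = (-θ₂, θ₁)). Then for every s ∈ ℝ: ∫_{ℝ²} e^{i s ⟨θ, q⟩} u(q) dq = ∫_{ℝ} e^{i s y} ( ∫_{ℝ} u(y θ + t θ⊥) dt ) dy, where the inner integral exists for almost every y. -/
/-!
Rotating coordinates by `(y, t) ↦ yθ + tθ⊥` is a linear map of determinant `|θ|² = 1`, hence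
preserves Lebesgue measure, and turns the phase `⟨θ, q⟩` into the first coordinate `y`.
Fubini in the rotated coordinates then integrates over each line `⟨θ, q⟩ = y` first.
-/

open MeasureTheory Complex

namespace LinearMap

variable {E F : Type*} [NormedAddCommGroup E] [NormedSpace ℝ E] [MeasurableSpace E] [BorelSpace E]
  [FiniteDimensional ℝ E] [NormedAddCommGroup F]
  (μ : Measure E) [μ.IsAddHaarMeasure] {f : E →ₗ[ℝ] E}

theorem measurePreserving_of_abs_det_eq_one (hf : |LinearMap.det f| = 1) :
    MeasurePreserving f μ μ := by
  refine ⟨(continuous_of_finiteDimensional f).measurable, ?_⟩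
  have hdet : LinearMap.det f ≠ 0 := fun h => by simp [h] at hf
  rw [Measure.map_linearMap_addHaar_eq_smul_addHaar μ hdet, abs_inv, hf]
  simp

theorem measurableEmbedding_of_det_ne_zero (hf : LinearMap.det f ≠ 0) : MeasurableEmbedding f :=
  (f.equivOfDetNeZero hf).toContinuousLinearEquiv.toHomeomorph.measurableEmbedding

theorem integral_comp_of_abs_det_eq_one [NormedSpace ℝ F] (hf : |LinearMap.det f| = 1)
    (g : E → F) :
    ∫ x, g (f x) ∂μ = ∫ x, g x ∂μ :=
  (measurePreserving_of_abs_det_eq_one μ hf).integral_comp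
    (measurableEmbedding_of_det_ne_zero fun h => by simp [h] at hf) g

theorem integrable_comp_of_abs_det_eq_one (hf : |LinearMap.det f| = 1) {g : E → F} :
    Integrable (g ∘ f) μ ↔ Integrable g μ :=
  (measurePreserving_of_abs_det_eq_one μ hf).integrable_comp_emb
    (measurableEmbedding_of_det_ne_zero fun h => by simp [h] at hf)

end LinearMap

theorem MeasureTheory.Integrable.exp_I_mul_mul {α : Type*} [MeasurableSpace α] {μ : Measure α}
    {f : α → ℂ} (hf : Integrable f μ) {φ : α → ℝ} (hφ : Measurable φ) (s : ℝ) :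
    Integrable (fun x => exp (I * s * φ x) * f x) μ := by
  refine hf.bdd_mul (c := 1) (by fun_prop) (ae_of_all _ fun x => ?_)
  rw [norm_exp]
  simp

theorem MeasureTheory.integral_prod_fst_mul {α β 𝕜 : Type*} [MeasurableSpace α]
    [MeasurableSpace β] [RCLike 𝕜] {μ : Measure α} {ν : Measure β} [SFinite μ] [SFinite ν]
    {g : α → 𝕜} {f : α × β → 𝕜}
    (hgf : Integrable (fun z => g z.1 * f z) (μ.prod ν)) :
    ∫ z, g z.1 * f z ∂μ.prod ν = ∫ x, g x * ∫ y, f (x, y) ∂ν ∂μ := by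
  simp_rw [integral_prod _ hgf, integral_const_mul]

/-- The map `(y, t) ↦ y θ + t θ⊥`, i.e. multiplication by `θ` in `ℂ ≅ ℝ²`. -/
noncomputable def planeRotation (θ : ℝ × ℝ) : (ℝ × ℝ) →ₗ[ℝ] (ℝ × ℝ) where
  toFun p := (p.1 * θ.1 - p.2 * θ.2, p.1 * θ.2 + p.2 * θ.1)
  map_add' p q := by ext <;> simp <;> ring
  map_smul' c p := by ext <;> simp <;> ring

theorem det_planeRotation (θ : ℝ × ℝ) : LinearMap.det (planeRotation θ) = θ.1 ^ 2 + θ.2 ^ 2 := by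
  rw [← LinearMap.det_toMatrix (Module.Basis.finTwoProd ℝ), Matrix.det_fin_two]
  simp [LinearMap.toMatrix_apply, planeRotation]
  ring

theorem inner_planeRotation (θ p : ℝ × ℝ) :
    θ.1 * (planeRotation θ p).1 + θ.2 * (planeRotation θ p).2 = (θ.1 ^ 2 + θ.2 ^ 2) * p.1 := by
  simp only [planeRotation, LinearMap.coe_mk, AddHom.coe_mk]
  ring

/-- projection/Fourier-slice theorem in dimension 2:
for `u ∈ L¹(ℝ²)`, a unit vector `θ` and `θ⊥ = (-θ₂, θ₁)`, for every `s ∈ ℝ` the inner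
(line) integral exists for a.e. `y` and
`∫_{ℝ²} e^{i s ⟨θ,q⟩} u(q) dq = ∫_ℝ e^{i s y} (∫_ℝ u(yθ + tθ⊥) dt) dy`. -/
theorem fourier_slice_radon_2D
    (u : ℝ × ℝ → ℂ) (hu : Integrable u)
    (θ : ℝ × ℝ) (hθ : θ.1 ^ 2 + θ.2 ^ 2 = 1) (s : ℝ) :
    (∀ᵐ y : ℝ, Integrable (fun t : ℝ => u (y * θ.1 - t * θ.2, y * θ.2 + t * θ.1))) ∧
    ∫ q : ℝ × ℝ, Complex.exp (Complex.I * s * (θ.1 * q.1 + θ.2 * q.2)) * u q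
      = ∫ y : ℝ, Complex.exp (Complex.I * s * y) *
          ∫ t : ℝ, u (y * θ.1 - t * θ.2, y * θ.2 + t * θ.1) := by
  have hdet : |LinearMap.det (planeRotation θ)| = 1 := by rw [det_planeRotation, hθ, abs_one]
  have hu_rot : Integrable (u ∘ planeRotation θ) (volume.prod volume) := by
    rwa [← Measure.volume_eq_prod, LinearMap.integrable_comp_of_abs_det_eq_one _ hdet]
  refine ⟨hu_rot.prod_right_ae, ?_⟩
  calc ∫ q : ℝ × ℝ, exp (I * s * (θ.1 * q.1 + θ.2 * q.2)) * u q
      = ∫ p : ℝ × ℝ, exp (I * s * p.1) * u (planeRotation θ p) := by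
        rw [← LinearMap.integral_comp_of_abs_det_eq_one volume hdet]
        simp only [← ofReal_mul, ← ofReal_add, inner_planeRotation, hθ, one_mul]
    _ = _ := by
        rw [Measure.volume_eq_prod]
        exact integral_prod_fst_mul (g := fun y : ℝ => exp (I * s * y))
          (hu_rot.exp_I_mul_mul measurable_fst s)
end

section
/- Let d ≥ 2, let u : ℝᵈ → ℂ be integrable, let θ ∈ ℝᵈ be a unit vector, and let (e₁, …, e_{d-1}) be an orthonormal basis of the orthogonal complement of the line spanned by θ. Then for every s ∈ ℝ: ∫_{ℝᵈ} e^{i s ⟨θ, q⟩} u(q) dq = ∫_{ℝ} e^{i s y} ( ∫_{ℝ^{d-1}} u(y θ + t₁ e₁ + ⋯ + t_{d-1} e_{d-1}) dt ) dy, where the inner integral over t ∈ ℝ^{d-1} exists for almost every y. -/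
open MeasureTheory Complex RealInnerProductSpace

/-!
Completing `θ` by the `eᵢ` gives an orthonormal basis, so `(y, t) ↦ y • θ + ∑ tᵢ • eᵢ` is a linear
isometry `ℝ × ℝ^{d-1} → ℝᵈ` and therefore preserves Lebesgue measure. Pulling the integral back
along it and applying Fubini gives an iterated integral over `y` and `t`; since
`⟪θ, y • θ + ∑ tᵢ • eᵢ⟫ = y`, the phase is constant on each slice and leaves the inner integral.
-/

namespace MeasureTheory.MeasurePreserving

variable {α β γ F : Type*} [MeasurableSpace α] [MeasurableSpace β] [MeasurableSpace γ]
  [NormedAddCommGroup F] {μ : Measure α} {ν : Measure β} {ρ : Measure γ}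
  [SFinite μ] [SFinite ν] {Φ : α × β → γ} {f : γ → F}

theorem ae_integrable_comp_prodMk (hΦ : MeasurePreserving Φ (μ.prod ν) ρ)
    (hf : Integrable f ρ) : ∀ᵐ x ∂μ, Integrable (fun y => f (Φ (x, y))) ν :=
  ((hΦ.integrable_comp hf.aestronglyMeasurable).2 hf).prod_right_ae

theorem integral_eq_integral_integral [NormedSpace ℝ F] (hΦ : MeasurePreserving Φ (μ.prod ν) ρ)
    (hf : Integrable f ρ) : ∫ z, f z ∂ρ = ∫ x, ∫ y, f (Φ (x, y)) ∂ν ∂μ := by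
  rw [← integral_prod (fun p => f (Φ p)) ((hΦ.integrable_comp hf.aestronglyMeasurable).2 hf),
    ← hΦ.map_eq, integral_map hΦ.aemeasurable (hΦ.map_eq ▸ hf.aestronglyMeasurable)]

end MeasureTheory.MeasurePreserving

theorem EuclideanSpace.volume_preserving_cons (n : ℕ) :
    MeasurePreserving (fun p : ℝ × EuclideanSpace ℝ (Fin n) =>
      WithLp.toLp 2 (Fin.cons p.1 p.2 : Fin (n + 1) → ℝ)) := by
  have := (PiLp.volume_preserving_toLp (Fin (n + 1))).comp <|
    (volume_preserving_piFinSuccAbove (fun _ => ℝ) 0).symm.comp <|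
      (MeasurePreserving.id volume).prod (PiLp.volume_preserving_ofLp (Fin n))
  rw [Measure.volume_eq_prod]
  convert this using 2 with p
  simp [Fin.consEquiv]

theorem OrthonormalBasis.measurePreserving_smul_add_sum {E : Type*} [NormedAddCommGroup E]
    [InnerProductSpace ℝ E] [FiniteDimensional ℝ E] [MeasurableSpace E] [BorelSpace E] {n : ℕ}
    (b : OrthonormalBasis (Fin (n + 1)) ℝ E) :
    MeasurePreserving (fun p : ℝ × EuclideanSpace ℝ (Fin n) =>
      p.1 • b 0 + ∑ i, p.2 i • b i.succ)
      ((volume : Measure ℝ).prod (volume : Measure (EuclideanSpace ℝ (Fin n)))) volume := by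
  convert b.measurePreserving_repr_symm.comp (EuclideanSpace.volume_preserving_cons n) using 1
  · ext p
    simp [← b.sum_repr_symm, Fin.sum_univ_succ]
  · exact (Measure.volume_eq_prod _ _).symm

theorem MeasureTheory.Integrable.cexp_I_mul_ofReal_mul {α : Type*} [MeasurableSpace α]
    [TopologicalSpace α] [OpensMeasurableSpace α] {μ : Measure α} {u : α → ℂ}
    (hu : Integrable u μ) (c : ℝ) {φ : α → ℝ} (hφ : Continuous φ) :
    Integrable (fun x => cexp (I * c * φ x) * u x) μ := by
  refine hu.bdd_mul (c := 1) ?_ (.of_forall fun x => ?_)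
  · fun_prop
  · rw [mul_assoc, ← ofReal_mul, norm_exp_I_mul_ofReal]

section OrthogonalComplement

variable {E : Type*} [NormedAddCommGroup E] [InnerProductSpace ℝ E] {n : ℕ} {θ : E}
  {e : Fin n → E}

theorem inner_eq_zero_of_span_eq_orthogonal
    (hspan : Submodule.span ℝ (Set.range e) = (Submodule.span ℝ {θ})ᗮ) (i : Fin n) :
    ⟪θ, e i⟫ = 0 := by
  have : e i ∈ (Submodule.span ℝ {θ})ᗮ := hspan ▸ Submodule.subset_span (Set.mem_range_self i)
  exact (Submodule.mem_orthogonal_singleton_iff_inner_right).1 this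

theorem span_range_vecCons_eq_top [FiniteDimensional ℝ E]
    (hspan : Submodule.span ℝ (Set.range e) = (Submodule.span ℝ {θ})ᗮ) :
    Submodule.span ℝ (Set.range (Matrix.vecCons θ e)) = ⊤ := by
  rw [Matrix.range_cons, Set.singleton_union, Submodule.span_insert, hspan,
    Submodule.sup_orthogonal_of_hasOrthogonalProjection]

theorem inner_smul_add_sum_of_orthogonal (hθ : ‖θ‖ = 1) (hθe : ∀ i, ⟪θ, e i⟫ = 0) (y : ℝ)
    (t : Fin n → ℝ) : ⟪θ, y • θ + ∑ i, t i • e i⟫ = y := by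
  simp [inner_add_right, real_inner_smul_right, inner_sum, hθe, hθ]

end OrthogonalComplement

theorem fourier_slice_radon_general
    (d : ℕ)
    (u : EuclideanSpace ℝ (Fin d) → ℂ) (hu : Integrable u)
    (θ : EuclideanSpace ℝ (Fin d)) (hθ : ‖θ‖ = 1)
    (e : Fin (d - 1) → EuclideanSpace ℝ (Fin d)) (he : Orthonormal ℝ e)
    (hspan : Submodule.span ℝ (Set.range e) = (Submodule.span ℝ {θ})ᗮ)
    (s : ℝ) :
    (∀ᵐ y : ℝ, Integrable (fun t : EuclideanSpace ℝ (Fin (d - 1)) =>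
        u (y • θ + ∑ i, t i • e i))) ∧
    ∫ q : EuclideanSpace ℝ (Fin d), Complex.exp (Complex.I * s * (⟪θ, q⟫ : ℝ)) * u q
      = ∫ y : ℝ, Complex.exp (Complex.I * s * y) *
          ∫ t : EuclideanSpace ℝ (Fin (d - 1)), u (y • θ + ∑ i, t i • e i) := by
  obtain _ | n := d
  · simp [Subsingleton.elim θ 0] at hθ
  have hθe := inner_eq_zero_of_span_eq_orthogonal hspan
  let b := OrthonormalBasis.mk (orthonormal_vecCons_iff.2 ⟨hθ, hθe, he⟩)
    (span_range_vecCons_eq_top hspan).ge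
  have hΦ := b.measurePreserving_smul_add_sum
  simp only [b, OrthonormalBasis.coe_mk, Matrix.cons_val_zero, Matrix.cons_val_succ] at hΦ
  refine ⟨hΦ.ae_integrable_comp_prodMk hu, ?_⟩
  have hφ : Continuous fun q => ⟪θ, q⟫ := by fun_prop
  rw [hΦ.integral_eq_integral_integral (hu.cexp_I_mul_ofReal_mul s hφ)]
  refine integral_congr_ae (.of_forall fun y => ?_)
  simp only [inner_smul_add_sum_of_orthogonal hθ hθe, integral_const_mul]

/-- projection/Fourier-slice theorem in dimension `d ≥ 2`:
for `u ∈ L¹(ℝᵈ)`, a unit vector `θ`, and an orthonormal basis `(e₁, …, e_{d-1})` of the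
orthogonal complement of the line spanned by `θ`, for every `s ∈ ℝ` the inner (hyperplane)
integral exists for a.e. `y` and
`∫_{ℝᵈ} e^{i s ⟨θ,q⟩} u(q) dq = ∫_ℝ e^{i s y} (∫_{ℝ^{d-1}} u(yθ + ∑ tᵢ eᵢ) dt) dy`. -/
theorem fourier_slice_radon
    (d : ℕ) (hd : 2 ≤ d)
    (u : EuclideanSpace ℝ (Fin d) → ℂ) (hu : Integrable u)
    (θ : EuclideanSpace ℝ (Fin d)) (hθ : ‖θ‖ = 1)
    (e : Fin (d - 1) → EuclideanSpace ℝ (Fin d)) (he : Orthonormal ℝ e)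
    (hspan : Submodule.span ℝ (Set.range e) = (Submodule.span ℝ {θ})ᗮ)
    (s : ℝ) :
    (∀ᵐ y : ℝ, Integrable (fun t : EuclideanSpace ℝ (Fin (d - 1)) =>
        u (y • θ + ∑ i, t i • e i))) ∧
    ∫ q : EuclideanSpace ℝ (Fin d), Complex.exp (Complex.I * s * (⟪θ, q⟫ : ℝ)) * u q
      = ∫ y : ℝ, Complex.exp (Complex.I * s * y) *
          ∫ t : EuclideanSpace ℝ (Fin (d - 1)), u (y • θ + ∑ i, t i • e i) :=
  fourier_slice_radon_general d u hu θ hθ e he hspan s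
end

section
/- Let c > 0 and let f : ℝ → ℂ be integrable on [-1, 1]. If ∫_{-1}^{1} e^{i c x y} f(y) dy = 0 for every x ∈ [-1, 1], then f = 0 almost everywhere on [-1, 1]. -/
/-!
Extend `f` by zero outside `[-1, 1]` to `F`. The hypothesis says that the Fourier transform
`𝓕 F` vanishes on a neighbourhood of `0`, so all its derivatives at `0` vanish; these are, up to
nonzero constants, the moments `∫ x ^ n • F x`. A function on `[-1, 1]` whose moments all vanish
integrates to zero against every polynomial, hence by Weierstrass approximation against every
continuous function, and is therefore zero almost everywhere.
-/

open MeasureTheory Complex Filter Set Topology FourierTransform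
open scoped Real

section Fourier

variable {E : Type*} [NormedAddCommGroup E] [NormedSpace ℂ E]

theorem integral_pow_smul_eq_zero_of_fourier_eventuallyEq_zero {f : ℝ → E}
    (hf : ∀ n : ℕ, Integrable (fun x : ℝ ↦ x ^ n • f x)) (h0 : 𝓕 f =ᶠ[𝓝 0] 0) (n : ℕ) :
    ∫ x, x ^ n • f x = 0 := by
  have hderiv := congrFun (Real.iteratedDeriv_fourier (N := ⊤) (fun n _ ↦ hf n) le_top (n := n)) 0
  have hsmul (x : ℝ) : (-2 * π * I * x) ^ n • f x = (-2 * π * I) ^ n • x ^ n • f x := by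
    rw [mul_pow, mul_smul, ← ofReal_pow, coe_smul]
  simp only [h0.iteratedDeriv_eq n, Pi.zero_def, iteratedDeriv_fun_const_zero,
    Real.fourier_real_eq, mul_zero, neg_zero, AddChar.map_zero_eq_one, one_smul, hsmul,
    integral_smul] at hderiv
  refine (smul_eq_zero.1 hderiv.symm).resolve_left ?_
  simp [Real.pi_ne_zero]

theorem fourier_indicator_Icc {a b : ℝ} (hab : a ≤ b) (f : ℝ → E) (w : ℝ) :
    𝓕 ((Icc a b).indicator f) w = ∫ v in a..b, exp (↑(-2 * π * v * w) * I) • f v := by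
  rw [Real.fourier_real_eq_integral_exp_smul, ← indicator_smul,
    integral_indicator measurableSet_Icc, integral_Icc_eq_integral_Ioc,
    intervalIntegral.integral_of_le hab]

end Fourier

section Moments

variable {E : Type*} [NormedAddCommGroup E] [NormedSpace ℝ E] {f : ℝ → E}

theorem integrable_pow_smul_indicator {s : Set ℝ} (hs : IsCompact s) (hf : IntegrableOn f s)
    (n : ℕ) : Integrable (fun x : ℝ ↦ x ^ n • s.indicator f x) := by
  rw [← indicator_smul, integrable_indicator_iff hs.measurableSet]
  exact hf.continuousOn_smul (continuousOn_pow n) hs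

theorem setIntegral_polynomial_smul_eq_zero {s : Set ℝ} (hs : IsCompact s) (hf : IntegrableOn f s)
    (h : ∀ n : ℕ, ∫ x in s, x ^ n • f x = 0) (p : Polynomial ℝ) :
    ∫ x in s, p.eval x • f x = 0 := by
  induction p using Polynomial.induction_on' with
  | monomial n a =>
    simp only [Polynomial.eval_monomial, mul_smul, integral_smul, h n, smul_zero]
  | add p q hp hq =>
    simp only [Polynomial.eval_add, add_smul]
    rw [integral_add (hf.continuousOn_smul p.continuousOn hs)
      (hf.continuousOn_smul q.continuousOn hs), hp, hq, add_zero]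

variable {a b : ℝ}

theorem setIntegral_Icc_smul_eq_zero_of_moments (hf : IntegrableOn f (Icc a b))
    (h : ∀ n : ℕ, ∫ x in Icc a b, x ^ n • f x = 0) {g : ℝ → ℝ} (hg : ContinuousOn g (Icc a b)) :
    ∫ x in Icc a b, g x • f x = 0 := by
  have hgf := hf.continuousOn_smul hg isCompact_Icc
  have hle (ε : ℝ) (hε : 0 < ε) : ‖∫ x in Icc a b, g x • f x‖ ≤ ε * ∫ x in Icc a b, ‖f x‖ := by
    obtain ⟨p, hp⟩ := exists_polynomial_near_of_continuousOn a b g hg ε hε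
    have hpf := hf.continuousOn_smul p.continuousOn isCompact_Icc
    calc ‖∫ x in Icc a b, g x • f x‖
        = ‖∫ x in Icc a b, (g x - p.eval x) • f x‖ := by
          simp only [sub_smul]
          rw [integral_sub hgf hpf, setIntegral_polynomial_smul_eq_zero isCompact_Icc hf h,
            sub_zero]
      _ ≤ ∫ x in Icc a b, ε * ‖f x‖ := by
          refine norm_integral_le_of_norm_le (hf.norm.const_mul ε) ?_
          filter_upwards [ae_restrict_mem measurableSet_Icc] with x hx
          rw [norm_smul, Real.norm_eq_abs, abs_sub_comm]
          exact mul_le_mul_of_nonneg_right (hp x hx).le (norm_nonneg _)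
      _ = ε * ∫ x in Icc a b, ‖f x‖ := integral_const_mul ε _
  have hlim : Tendsto (fun ε ↦ ε * ∫ x in Icc a b, ‖f x‖) (𝓝[>] 0) (𝓝 0) := by
    simpa using ((continuous_mul_const (∫ x in Icc a b, ‖f x‖)).tendsto (0 : ℝ)).mono_left
      nhdsWithin_le_nhds
  exact norm_le_zero_iff.1 (ge_of_tendsto hlim (eventually_nhdsWithin_of_forall hle))

theorem ae_restrict_Icc_eq_zero_of_moments [CompleteSpace E] (hf : IntegrableOn f (Icc a b))
    (h : ∀ n : ℕ, ∫ x in Icc a b, x ^ n • f x = 0) :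
    ∀ᵐ x ∂volume.restrict (Icc a b), f x = 0 :=
  ae_eq_zero_of_integral_contDiff_smul_eq_zero hf.locallyIntegrable fun _ hg _ ↦
    setIntegral_Icc_smul_eq_zero_of_moments hf h hg.continuous.continuousOn

end Moments

theorem fourier_indicator_Icc_eventuallyEq_zero_of_bandlimited {c : ℝ} (hc : 0 < c) {f : ℝ → ℂ}
    (h : ∀ x ∈ Icc (-1 : ℝ) 1, ∫ y in (-1 : ℝ)..1, exp (I * c * x * y) * f y = 0) :
    𝓕 ((Icc (-1 : ℝ) 1).indicator f) =ᶠ[𝓝 0] 0 := by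
  have hr : 0 < c / (2 * π) := by positivity
  filter_upwards [Icc_mem_nhds (neg_lt_zero.2 hr) hr] with w hw
  have hx : -(2 * π * w / c) ∈ Icc (-1 : ℝ) 1 := by
    rw [mem_Icc, ← abs_le, abs_neg, abs_div, abs_mul, abs_of_pos Real.two_pi_pos,
      abs_of_pos hc, div_le_one hc, ← le_div_iff₀' Real.two_pi_pos]
    exact abs_le.2 hw
  rw [fourier_indicator_Icc (by norm_num), Pi.zero_apply, ← h _ hx]
  refine intervalIntegral.integral_congr fun y _ ↦ ?_
  have : (c : ℂ) ≠ 0 := ofReal_ne_zero.2 hc.ne'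
  simp only [smul_eq_mul]
  congr 2
  push_cast
  field_simp

/-- injectivity of the band-limited Fourier transform `F_c`:
if `f` is integrable on `[-1,1]` and `∫_{-1}^1 e^{i c x y} f(y) dy = 0` for every
`x ∈ [-1,1]`, then `f = 0` a.e. on `[-1,1]`. -/
theorem bandlimited_fourier_injective
    (c : ℝ) (hc : 0 < c) (f : ℝ → ℂ)
    (hf : IntegrableOn f (Set.Icc (-1 : ℝ) 1))
    (h : ∀ x ∈ Set.Icc (-1 : ℝ) 1,
      ∫ y in (-1 : ℝ)..1, Complex.exp (Complex.I * c * x * y) * f y = 0) :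
    ∀ᵐ y ∂(volume.restrict (Set.Icc (-1 : ℝ) 1)), f y = 0 := by
  refine ae_restrict_Icc_eq_zero_of_moments hf fun n ↦ ?_
  rw [← integral_indicator measurableSet_Icc, indicator_smul]
  exact integral_pow_smul_eq_zero_of_fourier_eventuallyEq_zero
    (integrable_pow_smul_indicator isCompact_Icc hf)
    (fourier_indicator_Icc_eventuallyEq_zero_of_bandlimited hc h) n
end

section
/- Let c > 0. The range of the band-limited Fourier transform F_c acting on L²((-1,1)) is dense in L²((-1,1)): for every g ∈ L²((-1,1)) and every ε > 0 there exists f ∈ L²((-1,1)) such that ‖F_c[f] - g‖_{L²((-1,1))} < ε. -/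
open MeasureTheory Complex
open scoped ENNReal

noncomputable def Fc (c : ℝ) (f : ℝ → ℂ) (x : ℝ) : ℂ :=
  ∫ y in (-1:ℝ)..1, Complex.exp (Complex.I * c * x * y) * f y

local notation "μ" => volume.restrict (Set.Ioo (-1:ℝ) 1)

instance : IsFiniteMeasure (volume.restrict (Set.Ioo (-1:ℝ) 1)) := by
  constructor; simp [Real.volume_Ioo]

def UU (c : ℝ) (g : ℝ → ℂ) : Prop :=
  ∀ δ : ℝ, 0 < δ → ∃ f : ℝ → ℂ, MemLp f 2 μ ∧
    ∀ x ∈ Set.Ioo (-1:ℝ) 1, ‖Fc c f x - g x‖ ≤ δ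


lemma memLp_integrableOn {f : ℝ → ℂ} (hf : MemLp f 2 μ) :
    IntegrableOn f (Set.Ioo (-1:ℝ) 1) volume := by
  haveI : IsFiniteMeasure μ := by
    constructor; simp [Real.volume_Ioo]
  exact memLp_one_iff_integrable.mp (hf.mono_exponent (by norm_num))

lemma memLp_intervalIntegrable {f : ℝ → ℂ} (hf : MemLp f 2 μ) :
    IntervalIntegrable f volume (-1:ℝ) 1 := by
  rw [intervalIntegrable_iff_integrableOn_Ioo_of_le (by norm_num)]
  exact memLp_integrableOn hf

lemma exp_intervalIntegrable (c : ℝ) {f : ℝ → ℂ} (hf : MemLp f 2 μ) (x : ℝ) :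
    IntervalIntegrable (fun y => Complex.exp (Complex.I * c * x * y) * f y) volume (-1:ℝ) 1 := by
  have h := memLp_intervalIntegrable hf
  rw [intervalIntegrable_iff] at h ⊢
  apply Integrable.bdd_mul (c := 1) h
  · exact (Complex.continuous_exp.comp (by continuity)).aestronglyMeasurable
  · refine ae_of_all _ (fun y => ?_)
    rw [Complex.norm_exp]
    simp

lemma Fc_continuous (c : ℝ) {f : ℝ → ℂ} (hf : MemLp f 2 μ) : Continuous (Fc c f) := by
  have hfi : IntegrableOn f (Set.Ioc (-1:ℝ) 1) volume :=
    (integrableOn_Ioc_iff_integrableOn_Ioo).mpr (memLp_integrableOn hf)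
  have heq : Fc c f = fun x : ℝ => ∫ y in Set.Ioc (-1:ℝ) 1, Complex.exp (Complex.I * c * x * y) * f y := by
    funext x
    rw [Fc, intervalIntegral.integral_of_le (by norm_num : (-1:ℝ) ≤ 1)]
  rw [heq]
  apply continuous_of_dominated (bound := fun y => ‖f y‖)
  · intro x
    exact (Complex.continuous_exp.comp (by continuity)).aestronglyMeasurable.mul
      hfi.1
  · intro x
    filter_upwards with y
    have : ‖Complex.exp (Complex.I * c * x * y)‖ = 1 := by
      rw [Complex.norm_exp]; simp
    rw [norm_mul, this, one_mul]
  · exact hfi.norm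
  · filter_upwards with y
    exact Continuous.mul (Complex.continuous_exp.comp (by continuity)) continuous_const

lemma norm_exp_I_sub_one_sub (s : ℝ) (hs : |s| ≤ 1) :
    ‖Complex.exp (Complex.I * s) - 1 - Complex.I * s‖ ≤ |s|^2 := by
  have h : ‖Complex.I * s‖ ≤ 1 := by simpa using hs
  have := Complex.exp_bound h (by norm_num : (0:ℕ) < 2)
  have e : ∑ m ∈ Finset.range 2, (Complex.I * s) ^ m / m.factorial = 1 + Complex.I * s := by
    simp [Finset.sum_range_succ]
  rw [e] at this
  have habs : ‖Complex.I * s‖ = |s| := by simp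
  rw [habs] at this
  calc ‖Complex.exp (Complex.I * s) - 1 - Complex.I * s‖
      = ‖Complex.exp (Complex.I * s) - (1 + Complex.I * s)‖ := by
        ring_nf
    _ ≤ |s| ^ 2 * ((2+1 : ℕ) * ((2:ℕ).factorial * (2:ℕ) : ℝ)⁻¹) := this
    _ ≤ |s| ^ 2 := by
        have : ((2+1 : ℕ) * (((2:ℕ).factorial * (2:ℕ) : ℝ))⁻¹ : ℝ) ≤ 1 := by norm_num [Nat.factorial]
        nlinarith [sq_nonneg |s|, abs_nonneg s]

lemma norm_exp_I_sub_one (s : ℝ) (hs : |s| ≤ 1) :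
    ‖Complex.exp (Complex.I * s) - 1‖ ≤ 2 * |s| := by
  have h : ‖Complex.I * s‖ ≤ 1 := by simpa using hs
  simpa using Complex.norm_exp_sub_one_le h

lemma exp_I_cast (c x y : ℝ) :
    Complex.exp (Complex.I * c * x * y) = Complex.exp (Complex.I * ((c*x*y : ℝ) : ℂ)) := by
  push_cast; ring_nf

lemma norm_exp_I_cxy (c x y : ℝ) : ‖Complex.exp (Complex.I * c * x * y)‖ = 1 := by
  rw [exp_I_cast, Complex.norm_exp]
  simp

lemma exp_diff_bound (a b : ℝ) (h : |a - b| ≤ 1) :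
    ‖Complex.exp (Complex.I * a) - Complex.exp (Complex.I * b)‖ ≤ 2 * |a - b| := by
  have key : Complex.exp (Complex.I * a) - Complex.exp (Complex.I * b)
      = Complex.exp (Complex.I * b) * (Complex.exp (Complex.I * ((a - b : ℝ):ℂ)) - 1) := by
    rw [mul_sub, ← Complex.exp_add, mul_one]
    push_cast; ring_nf
  rw [key, norm_mul]
  have h1 : ‖Complex.exp (Complex.I * (b:ℂ))‖ = 1 := by
    rw [Complex.norm_exp]; simp
  rw [h1, one_mul]
  exact norm_exp_I_sub_one _ h

lemma UU_add {c : ℝ} {g1 g2 : ℝ → ℂ} (h1 : UU c g1) (h2 : UU c g2) :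
    UU c (fun x => g1 x + g2 x) := by
  intro δ hδ
  obtain ⟨f1, hf1, hb1⟩ := h1 (δ/2) (by linarith)
  obtain ⟨f2, hf2, hb2⟩ := h2 (δ/2) (by linarith)
  refine ⟨f1 + f2, hf1.add hf2, fun x hx => ?_⟩
  have hFadd : Fc c (f1 + f2) x = Fc c f1 x + Fc c f2 x := by
    unfold Fc
    rw [← intervalIntegral.integral_add (exp_intervalIntegrable c hf1 x)
      (exp_intervalIntegrable c hf2 x)]
    congr 1; funext y; simp [mul_add]
  rw [hFadd]
  calc ‖Fc c f1 x + Fc c f2 x - (g1 x + g2 x)‖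
      = ‖(Fc c f1 x - g1 x) + (Fc c f2 x - g2 x)‖ := by ring_nf
    _ ≤ ‖Fc c f1 x - g1 x‖ + ‖Fc c f2 x - g2 x‖ := norm_add_le _ _
    _ ≤ δ/2 + δ/2 := add_le_add (hb1 x hx) (hb2 x hx)
    _ = δ := by ring

lemma UU_smul {c : ℝ} {g : ℝ → ℂ} (a : ℂ) (h : UU c g) :
    UU c (fun x => a * g x) := by
  intro δ hδ
  obtain ⟨f, hf, hb⟩ := h (δ / (‖a‖ + 1)) (by positivity)
  refine ⟨fun y => a * f y, by simpa using hf.const_mul a, fun x hx => ?_⟩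
  have hF : Fc c (fun y => a * f y) x = a * Fc c f x := by
    unfold Fc
    rw [← intervalIntegral.integral_const_mul]
    congr 1; funext y; ring
  rw [hF]
  calc ‖a * Fc c f x - a * g x‖ = ‖a‖ * ‖Fc c f x - g x‖ := by
        rw [← norm_mul]; ring_nf
    _ ≤ ‖a‖ * (δ / (‖a‖ + 1)) := by
        apply mul_le_mul_of_nonneg_left (hb x hx) (norm_nonneg a)
    _ ≤ δ := by
        rw [div_eq_inv_mul]
        have h1 : (0:ℝ) < ‖a‖ + 1 := by positivity
        rw [mul_comm ((‖a‖+1)⁻¹) δ, ← mul_assoc]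
        have : ‖a‖ * (‖a‖ + 1)⁻¹ ≤ 1 := by
          rw [mul_inv_le_iff₀ h1]; linarith
        nlinarith

lemma UU_exp (c : ℝ) (hc : 0 < c) {t : ℝ} (ht : t ∈ Set.Ioo (-1:ℝ) 1) :
    UU c (fun x => Complex.exp (Complex.I * c * x * t)) := by
  obtain ⟨ht1, ht2⟩ := ht
  intro δ hδ
  set r : ℝ := min (min ((1-t)/2) ((t+1)/2)) (min (1/c) (δ/(4*c))) with hr
  have hrpos : 0 < r := by
    apply lt_min (lt_min (by linarith) (by linarith)) (lt_min (by positivity) (by positivity))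
  have hr1 : t + r < 1 := by
    have : r ≤ (1-t)/2 := (min_le_left _ _).trans (min_le_left _ _)
    linarith
  have hr2 : -1 < t - r := by
    have : r ≤ (t+1)/2 := (min_le_left _ _).trans (min_le_right _ _)
    linarith
  have hrc : c * r ≤ 1 := by
    have : r ≤ 1/c := (min_le_right _ _).trans (min_le_left _ _)
    rw [mul_comm]
    calc r * c ≤ (1/c) * c := by nlinarith
      _ = 1 := by field_simp
  have hrδ : 2 * (c * r) ≤ δ := by
    have h1 : r ≤ δ/(4*c) := (min_le_right _ _).trans (min_le_right _ _)
    have h2 : c * r ≤ c * (δ/(4*c)) := mul_le_mul_of_nonneg_left h1 hc.le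
    have h3 : c * (δ/(4*c)) = δ/4 := by field_simp
    linarith
  set f : ℝ → ℂ := Set.indicator (Set.Ioo (t-r) (t+r)) (fun _ => ((2*r)⁻¹ : ℝ)) with hf
  have hfmeas : AEStronglyMeasurable f μ :=
    ((measurable_const.indicator measurableSet_Ioo)).aestronglyMeasurable
  have hfbdd : ∀ y, ‖f y‖ ≤ (2*r)⁻¹ := by
    intro y
    rw [hf]
    by_cases h : y ∈ Set.Ioo (t-r) (t+r)
    · rw [Set.indicator_of_mem h, Complex.norm_real, Real.norm_eq_abs,
        _root_.abs_of_nonneg (by positivity : (0:ℝ) ≤ (2*r)⁻¹)]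
    · rw [Set.indicator_of_notMem h]
      simp only [norm_zero]
      positivity
  have hfLp : MemLp f 2 μ :=
    MemLp.of_bound hfmeas _ (Filter.Eventually.of_forall hfbdd)
  refine ⟨f, hfLp, fun x hx => ?_⟩
  obtain ⟨hx1, hx2⟩ := hx
  have hsub : Set.Ioo (t-r) (t+r) ⊆ Set.Ioc (-1:ℝ) 1 := by
    intro y hy
    exact ⟨by linarith [hy.1], by linarith [hy.2]⟩
  have hFc : Fc c f x
      = ∫ y in (t-r)..(t+r), Complex.exp (Complex.I * c * x * y) * ((2*r)⁻¹ : ℝ) := by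
    rw [Fc, intervalIntegral.integral_of_le (by norm_num : (-1:ℝ) ≤ 1),
      intervalIntegral.integral_of_le (by linarith : t - r ≤ t + r)]
    have hind : (fun y : ℝ => Complex.exp (Complex.I * c * x * y) * f y)
        = Set.indicator (Set.Ioo (t-r) (t+r))
            (fun y => Complex.exp (Complex.I * c * x * y) * ((2*r)⁻¹ : ℝ)) := by
      funext y
      by_cases h : y ∈ Set.Ioo (t-r) (t+r)
      · rw [Set.indicator_of_mem h, hf, Set.indicator_of_mem h]
      · rw [Set.indicator_of_notMem h, hf, Set.indicator_of_notMem h, mul_zero]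
    rw [hind, MeasureTheory.setIntegral_indicator measurableSet_Ioo,
      Set.inter_eq_self_of_subset_right hsub,
      ← MeasureTheory.integral_Ioc_eq_integral_Ioo]
  have hconst : (∫ y in (t-r)..(t+r), Complex.exp (Complex.I * c * x * t) * ((2*r)⁻¹ : ℝ))
      = Complex.exp (Complex.I * c * x * t) := by
    rw [intervalIntegral.integral_const]
    have h2r : ((t+r) - (t-r)) = 2*r := by ring
    rw [h2r, real_smul]
    rw [show ((2*r:ℝ):ℂ) * (Complex.exp (Complex.I * c * x * t) * (((2*r)⁻¹:ℝ):ℂ))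
        = Complex.exp (Complex.I * c * x * t) * (((2*r:ℝ):ℂ) * (((2*r)⁻¹:ℝ):ℂ)) from by ring,
      ← Complex.ofReal_mul, mul_inv_cancel₀ (by positivity : (2*r:ℝ) ≠ 0)]
    simp
  have hint1 : IntervalIntegrable
      (fun y => Complex.exp (Complex.I * c * x * y) * ((2*r)⁻¹ : ℝ)) volume (t-r) (t+r) :=
    (Continuous.mul (Complex.continuous_exp.comp (continuous_const.mul Complex.continuous_ofReal)) continuous_const).intervalIntegrable _ _
  have hint2 : IntervalIntegrable
      (fun _ : ℝ => Complex.exp (Complex.I * c * x * t) * ((2*r)⁻¹ : ℝ)) volume (t-r) (t+r) :=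
    intervalIntegrable_const
  have hdiff : Fc c f x - Complex.exp (Complex.I * c * x * t)
      = ∫ y in (t-r)..(t+r),
          (Complex.exp (Complex.I * c * x * y) - Complex.exp (Complex.I * c * x * t)) * ((2*r)⁻¹ : ℝ) := by
    have h1 : ∀ y : ℝ, (Complex.exp (Complex.I * c * x * y) - Complex.exp (Complex.I * c * x * t)) * ((2*r)⁻¹ : ℝ)
        = Complex.exp (Complex.I * c * x * y) * ((2*r)⁻¹ : ℝ) - Complex.exp (Complex.I * c * x * t) * ((2*r)⁻¹ : ℝ) :=
      fun y => by ring
    simp_rw [h1]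
    rw [intervalIntegral.integral_sub hint1 hint2, hconst, hFc]
  rw [hdiff]
  have hbound : ∀ y ∈ Set.uIoc (t-r) (t+r),
      ‖(Complex.exp (Complex.I * c * x * y) - Complex.exp (Complex.I * c * x * t)) * ((2*r)⁻¹ : ℝ)‖ ≤ c := by
    intro y hy
    rw [Set.uIoc_of_le (by linarith : t - r ≤ t + r)] at hy
    have hyt : |y - t| ≤ r := by
      rw [abs_le]; constructor <;> [linarith [hy.1]; linarith [hy.2]]
    have hxle : |x| ≤ 1 := by rw [abs_le]; constructor <;> linarith
    have hab : |c*x*y - c*x*t| ≤ c * r := by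
      have : c*x*y - c*x*t = c*x*(y-t) := by ring
      rw [this, abs_mul, abs_mul, abs_of_pos hc]
      calc c * |x| * |y - t| ≤ c * 1 * r := by
            apply mul_le_mul (mul_le_mul le_rfl hxle (abs_nonneg x) hc.le) hyt (abs_nonneg _) (by positivity)
        _ = c * r := by ring
    have h1 : |c*x*y - c*x*t| ≤ 1 := hab.trans hrc
    have hd := exp_diff_bound (c*x*y) (c*x*t) h1
    have hcast : Complex.I * ((c*x*y : ℝ):ℂ) = Complex.I * c * x * y := by push_cast; ring
    have hcast2 : Complex.I * ((c*x*t : ℝ):ℂ) = Complex.I * c * x * t := by push_cast; ring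
    rw [hcast, hcast2] at hd
    rw [norm_mul, Complex.norm_real, Real.norm_eq_abs,
      _root_.abs_of_nonneg (by positivity : (0:ℝ) ≤ (2*r)⁻¹)]
    calc ‖Complex.exp (Complex.I * c * x * y) - Complex.exp (Complex.I * c * x * t)‖ * (2*r)⁻¹
        ≤ (2 * (c*r)) * (2*r)⁻¹ := by
          apply mul_le_mul_of_nonneg_right (hd.trans (by linarith)) (by positivity)
      _ = c := by field_simp
  calc ‖∫ y in (t-r)..(t+r),
        (Complex.exp (Complex.I * c * x * y) - Complex.exp (Complex.I * c * x * t)) * ((2*r)⁻¹ : ℝ)‖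
      ≤ c * |(t+r) - (t-r)| := intervalIntegral.norm_integral_le_of_norm_le_const hbound
    _ = 2 * (c * r) := by rw [show (t+r) - (t-r) = 2*r by ring, abs_of_pos (by positivity)]; ring
    _ ≤ δ := hrδ

lemma UU_monomial_exp (c : ℝ) (hc : 0 < c) :
    ∀ n : ℕ, ∀ t ∈ Set.Ioo (-1:ℝ) 1,
      UU c (fun x => (x:ℂ)^n * Complex.exp (Complex.I * c * x * t)) := by
  intro n
  induction n with
  | zero =>
    intro t ht
    simpa using UU_exp c hc ht
  | succ n ih =>
    intro t ht
    obtain ⟨ht1, ht2⟩ := ht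
    intro δ hδ
    set h : ℝ := min ((1-t)/2) (min (1/c) (δ/(2*c))) with hh
    have hhpos : 0 < h := lt_min (by linarith) (lt_min (by positivity) (by positivity))
    have hth : t + h < 1 := by
      have : h ≤ (1-t)/2 := min_le_left _ _
      linarith
    have hch : c * h ≤ 1 := by
      have h1 : h ≤ 1/c := (min_le_right _ _).trans (min_le_left _ _)
      have := mul_le_mul_of_nonneg_left h1 hc.le
      rwa [mul_one_div, div_self hc.ne'] at this
    have hchδ : c * h ≤ δ/2 := by
      have h1 : h ≤ δ/(2*c) := (min_le_right _ _).trans (min_le_right _ _)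
      have := mul_le_mul_of_nonneg_left h1 hc.le
      calc c * h ≤ c * (δ/(2*c)) := this
        _ = δ/2 := by field_simp
    set a : ℂ := (Complex.I * c * h)⁻¹ with ha
    have hIch : (Complex.I * (c:ℂ) * (h:ℂ)) ≠ 0 := by
      apply mul_ne_zero (mul_ne_zero Complex.I_ne_zero _)
      · exact_mod_cast hhpos.ne'
      · exact_mod_cast hc.ne'
    set G : ℝ → ℂ := fun x => a * ((x:ℂ)^n * Complex.exp (Complex.I * c * x * ((t+h : ℝ):ℂ)))
        + (-a) * ((x:ℂ)^n * Complex.exp (Complex.I * c * x * t)) with hG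
    have hcomb : UU c G :=
      UU_add (UU_smul a (ih (t+h) ⟨by linarith, hth⟩))
        (UU_smul (-a) (ih t ⟨ht1, ht2⟩))
    obtain ⟨f, hfLp, hfb⟩ := hcomb (δ/2) (by linarith)
    refine ⟨f, hfLp, fun x hx => ?_⟩
    obtain ⟨hx1, hx2⟩ := hx
    have hxle : |x| ≤ 1 := by rw [abs_le]; constructor <;> linarith
    have hsplit : Complex.exp (Complex.I * c * x * ((t+h):ℝ))
        = Complex.exp (Complex.I * c * x * t) * Complex.exp (Complex.I * ((c*x*h : ℝ):ℂ)) := by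
      rw [← Complex.exp_add]; congr 1; push_cast; ring
    have hkey : G x - (x:ℂ)^(n+1) * Complex.exp (Complex.I * c * x * t)
        = (x:ℂ)^n * Complex.exp (Complex.I * c * x * t) * a
            * (Complex.exp (Complex.I * ((c*x*h : ℝ):ℂ)) - 1 - Complex.I * ((c*x*h : ℝ):ℂ)) := by
      rw [hG]
      simp only [ha]
      rw [hsplit]
      push_cast
      have hc0 : (c:ℂ) ≠ 0 := by exact_mod_cast hc.ne'
      have hh0 : (h:ℂ) ≠ 0 := by exact_mod_cast hhpos.ne'
      field_simp
      ring
    have hnorm_a : ‖a‖ = (c*h)⁻¹ := by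
      rw [ha, norm_inv, norm_mul, norm_mul, Complex.norm_I, one_mul,
        Complex.norm_real, Complex.norm_real, Real.norm_eq_abs, Real.norm_eq_abs,
        _root_.abs_of_pos hc, _root_.abs_of_pos hhpos]
    have hcxh : |c*x*h| ≤ c*h := by
      rw [abs_mul, abs_mul, _root_.abs_of_pos hc, _root_.abs_of_pos hhpos]
      have := mul_le_mul_of_nonneg_left hxle hc.le
      nlinarith [hhpos.le]
    have hE : ‖Complex.exp (Complex.I * ((c*x*h : ℝ):ℂ)) - 1 - Complex.I * ((c*x*h : ℝ):ℂ)‖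
        ≤ (c*h)^2 := by
      calc _ ≤ |c*x*h|^2 := norm_exp_I_sub_one_sub _ (hcxh.trans hch)
        _ ≤ (c*h)^2 := by
            apply pow_le_pow_left₀ (abs_nonneg _) hcxh
    have hxn : |x| ^ n ≤ 1 := pow_le_one₀ (abs_nonneg x) hxle
    have hbound : ‖G x - (x:ℂ)^(n+1) * Complex.exp (Complex.I * c * x * t)‖ ≤ δ/2 := by
      rw [hkey, norm_mul, norm_mul, norm_mul, norm_pow, hnorm_a, norm_exp_I_cxy,
        Complex.norm_real, Real.norm_eq_abs]
      calc |x|^n * 1 * (c*h)⁻¹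
            * ‖Complex.exp (Complex.I * ((c*x*h : ℝ):ℂ)) - 1 - Complex.I * ((c*x*h : ℝ):ℂ)‖
          ≤ 1 * 1 * (c*h)⁻¹ * (c*h)^2 := by
            gcongr
        _ = c*h := by field_simp
        _ ≤ δ/2 := hchδ
    have h1 := hfb x ⟨hx1, hx2⟩
    calc ‖Fc c f x - (x:ℂ)^(n+1) * Complex.exp (Complex.I * c * x * t)‖
        ≤ ‖Fc c f x - G x‖ + ‖G x - (x:ℂ)^(n+1) * Complex.exp (Complex.I * c * x * t)‖ :=
          norm_sub_le_norm_sub_add_norm_sub _ _ _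
      _ ≤ δ/2 + δ/2 := add_le_add h1 hbound
      _ = δ := by ring

lemma UU_zero (c : ℝ) : UU c (fun _ => 0) := by
  intro δ hδ
  refine ⟨0, MemLp.zero, fun x hx => ?_⟩
  have : Fc c 0 x = 0 := by
    rw [Fc]
    simp
  rw [this]
  simp [hδ.le]

lemma UU_monomial (c : ℝ) (hc : 0 < c) (n : ℕ) : UU c (fun x => (x:ℂ)^n) := by
  have := UU_monomial_exp c hc n 0 (by constructor <;> norm_num)
  simpa using this

lemma UU_polysum (c : ℝ) (hc : 0 < c) (m : ℕ) (b : ℕ → ℂ) :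
    UU c (fun x => ∑ i ∈ Finset.range m, b i * (x:ℂ)^i) := by
  induction m with
  | zero => simpa using UU_zero c
  | succ m ihm =>
    have := UU_add ihm (UU_smul (b m) (UU_monomial c hc m))
    simpa [Finset.sum_range_succ] using this

lemma UU_realpoly (c : ℝ) (hc : 0 < c) (p : Polynomial ℝ) :
    UU c (fun x => ((p.eval x : ℝ) : ℂ)) := by
  have heq : (fun x : ℝ => ((p.eval x : ℝ) : ℂ))
      = fun x : ℝ => ∑ i ∈ Finset.range (p.natDegree + 1), ((p.coeff i : ℝ) : ℂ) * (x:ℂ)^i := by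
    funext x
    rw [Polynomial.eval_eq_sum_range]
    push_cast
    ring_nf
  rw [heq]
  exact UU_polysum c hc _ _

lemma UU_cont_approx (c : ℝ) (hc : 0 < c) (u : ℝ → ℂ) (hu : Continuous u)
    {δ : ℝ} (hδ : 0 < δ) :
    ∃ v : ℝ → ℂ, Continuous v ∧ UU c v ∧ ∀ x ∈ Set.Icc (-1:ℝ) 1, ‖v x - u x‖ ≤ δ := by
  obtain ⟨p1, hp1⟩ := exists_polynomial_near_of_continuousOn (-1) 1 (fun x => (u x).re)
    ((Complex.continuous_re.comp hu).continuousOn) (δ/2) (by linarith)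
  obtain ⟨p2, hp2⟩ := exists_polynomial_near_of_continuousOn (-1) 1 (fun x => (u x).im)
    ((Complex.continuous_im.comp hu).continuousOn) (δ/2) (by linarith)
  refine ⟨fun x => ((p1.eval x : ℝ) : ℂ) + Complex.I * ((p2.eval x : ℝ) : ℂ), ?_, ?_, ?_⟩
  · exact (Complex.continuous_ofReal.comp p1.continuous).add
      (continuous_const.mul (Complex.continuous_ofReal.comp p2.continuous))
  · exact UU_add (UU_realpoly c hc p1) (UU_smul Complex.I (UU_realpoly c hc p2))
  · intro x hx
    have hdec : ((p1.eval x : ℝ) : ℂ) + Complex.I * ((p2.eval x : ℝ) : ℂ) - u x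
        = ((p1.eval x - (u x).re : ℝ) : ℂ) + Complex.I * ((p2.eval x - (u x).im : ℝ) : ℂ) := by
      apply Complex.ext <;> simp
    rw [hdec]
    calc ‖((p1.eval x - (u x).re : ℝ) : ℂ) + Complex.I * ((p2.eval x - (u x).im : ℝ) : ℂ)‖
        ≤ ‖((p1.eval x - (u x).re : ℝ) : ℂ)‖ + ‖Complex.I * ((p2.eval x - (u x).im : ℝ) : ℂ)‖ :=
          norm_add_le _ _
      _ = |p1.eval x - (u x).re| + |p2.eval x - (u x).im| := by
          rw [norm_mul, Complex.norm_I, one_mul, Complex.norm_real, Complex.norm_real,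
            Real.norm_eq_abs, Real.norm_eq_abs]
      _ ≤ δ/2 + δ/2 := add_le_add (hp1 x hx).le (hp2 x hx).le
      _ = δ := by ring

lemma eLpNorm_le_of_sup {w : ℝ → ℂ} {δ : ℝ} (h : ∀ x ∈ Set.Ioo (-1:ℝ) 1, ‖w x‖ ≤ δ) :
    eLpNorm w 2 μ ≤ ENNReal.ofReal (2*δ) := by
  have hb : ∀ᵐ x ∂μ, ‖w x‖ ≤ δ := (ae_restrict_iff' measurableSet_Ioo).2 (ae_of_all _ h)
  have h1 := eLpNorm_le_of_ae_bound (p := 2) hb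
  have h2 : (volume.restrict (Set.Ioo (-1:ℝ) 1)) Set.univ = ENNReal.ofReal 2 := by
    rw [Measure.restrict_apply_univ, Real.volume_Ioo]
    norm_num
  have h3 : ((2:ℝ≥0∞).toReal)⁻¹ = (2:ℝ)⁻¹ := by norm_num
  rw [h2, h3] at h1
  refine h1.trans ?_
  have h4 : (ENNReal.ofReal 2) ^ ((2:ℝ)⁻¹) ≤ ENNReal.ofReal 2 := by
    calc (ENNReal.ofReal 2) ^ ((2:ℝ)⁻¹) ≤ (ENNReal.ofReal 2) ^ (1:ℝ) := by
          apply ENNReal.rpow_le_rpow_of_exponent_le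
          · simp [ENNReal.one_le_ofReal]
          · norm_num
      _ = ENNReal.ofReal 2 := by rw [ENNReal.rpow_one]
  calc (ENNReal.ofReal 2) ^ ((2:ℝ)⁻¹) * ENNReal.ofReal δ
      ≤ ENNReal.ofReal 2 * ENNReal.ofReal δ := by
        exact mul_le_mul_left h4 _
    _ = ENNReal.ofReal (2*δ) := by
        rw [← ENNReal.ofReal_mul (by norm_num : (0:ℝ) ≤ 2)]

/-- density of the range of `F_c` on `L²((-1,1))`:
for every `g ∈ L²((-1,1))` and `ε > 0` there is `f ∈ L²((-1,1))` with
`‖F_c[f] - g‖_{L²((-1,1))} < ε`, where `F_c[f](x) = ∫_{-1}^1 e^{i c x y} f(y) dy`. -/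
theorem bandlimited_fourier_range_dense
    (c : ℝ) (hc : 0 < c)
    (g : ℝ → ℂ) (hg : MemLp g 2 (volume.restrict (Set.Ioo (-1 : ℝ) 1)))
    (ε : ℝ) (hε : 0 < ε) :
    ∃ f : ℝ → ℂ, MemLp f 2 (volume.restrict (Set.Ioo (-1 : ℝ) 1)) ∧
      eLpNorm
        (fun x : ℝ => (∫ y in (-1 : ℝ)..1, Complex.exp (Complex.I * c * x * y) * f y) - g x)
        2 (volume.restrict (Set.Ioo (-1 : ℝ) 1)) < ENNReal.ofReal ε := by
  set G : ℝ → ℂ := (Set.Ioo (-1:ℝ) 1).indicator g with hGdef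
  have hGmeas : AEStronglyMeasurable G volume :=
    (aestronglyMeasurable_indicator_iff measurableSet_Ioo).2 hg.aestronglyMeasurable
  have hGLp : MemLp G 2 volume := by
    refine ⟨hGmeas, ?_⟩
    rw [hGdef, eLpNorm_indicator_eq_eLpNorm_restrict measurableSet_Ioo]
    exact hg.2
  obtain ⟨u, -, hGu, hucont, -⟩ := hGLp.exists_hasCompactSupport_eLpNorm_sub_le
    (by norm_num : (2:ℝ≥0∞) ≠ ⊤)
    ((ENNReal.ofReal_pos.mpr (by linarith : (0:ℝ) < ε/4)).ne')
  have hug : eLpNorm (fun x => u x - g x) 2 μ ≤ ENNReal.ofReal (ε/4) := by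
    have h1 : eLpNorm (G - u) 2 μ ≤ eLpNorm (G - u) 2 volume :=
      eLpNorm_mono_measure _ Measure.restrict_le_self
    have hae : (fun x => u x - g x) =ᵐ[μ] (fun x => -((G - u) x)) := by
      refine (ae_restrict_iff' measurableSet_Ioo).2 (ae_of_all _ fun x hx => ?_)
      simp only [Pi.sub_apply, hGdef, Set.indicator_of_mem hx]
      ring
    rw [eLpNorm_congr_ae hae, show (fun x => -((G - u) x)) = -(G - u) from rfl, eLpNorm_neg]
    exact h1.trans hGu
  obtain ⟨v, hvcont, hvUU, hvapprox⟩ := UU_cont_approx c hc u hucont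
    (δ := ε/16) (by linarith)
  have hvu : eLpNorm (fun x => v x - u x) 2 μ ≤ ENNReal.ofReal (2*(ε/16)) :=
    eLpNorm_le_of_sup (fun x hx => hvapprox x (Set.Ioo_subset_Icc_self hx))
  obtain ⟨f, hfLp, hfb⟩ := hvUU (ε/16) (by linarith)
  have hfv : eLpNorm (fun x => Fc c f x - v x) 2 μ ≤ ENNReal.ofReal (2*(ε/16)) :=
    eLpNorm_le_of_sup hfb
  refine ⟨f, hfLp, ?_⟩
  have hAmeas : AEStronglyMeasurable (fun x => Fc c f x - v x) μ :=
    ((Fc_continuous c hfLp).sub hvcont).aestronglyMeasurable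
  have hBmeas : AEStronglyMeasurable (fun x => v x - u x) μ :=
    (hvcont.sub hucont).aestronglyMeasurable
  have hCmeas : AEStronglyMeasurable (fun x => u x - g x) μ :=
    hucont.aestronglyMeasurable.sub hg.aestronglyMeasurable
  have hdecomp : (fun x : ℝ => (∫ y in (-1 : ℝ)..1, Complex.exp (Complex.I * c * x * y) * f y) - g x)
      = (fun x => Fc c f x - v x) + ((fun x => v x - u x) + (fun x => u x - g x)) := by
    funext x
    simp only [Pi.add_apply, Fc]
    ring
  rw [hdecomp]
  calc eLpNorm ((fun x => Fc c f x - v x) + ((fun x => v x - u x) + (fun x => u x - g x))) 2 μ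
      ≤ eLpNorm (fun x => Fc c f x - v x) 2 μ
        + eLpNorm ((fun x => v x - u x) + (fun x => u x - g x)) 2 μ :=
        eLpNorm_add_le hAmeas (hBmeas.add hCmeas) one_le_two
    _ ≤ eLpNorm (fun x => Fc c f x - v x) 2 μ
        + (eLpNorm (fun x => v x - u x) 2 μ + eLpNorm (fun x => u x - g x) 2 μ) :=
        add_le_add le_rfl (eLpNorm_add_le hBmeas hCmeas one_le_two)
    _ ≤ ENNReal.ofReal (2*(ε/16)) + (ENNReal.ofReal (2*(ε/16)) + ENNReal.ofReal (ε/4)) := by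
        exact add_le_add hfv (add_le_add hvu hug)
    _ = ENNReal.ofReal (2*(ε/16) + (2*(ε/16) + ε/4)) := by
        rw [← ENNReal.ofReal_add (by linarith) (by linarith),
          ← ENNReal.ofReal_add (by linarith) (by linarith)]
    _ < ENNReal.ofReal ε := by
        rw [ENNReal.ofReal_lt_ofReal_iff hε]
        linarith
end
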